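/- For every integer n ≥ 2, in a directed graph on states {s₀, s₁, s₂} where there are 6 edges s₀→s₁, 4 edges s₁→s₂, 6 edges s₂→s₀, and 1 self-loop s₁→s₁, the number of walks of length n − 1 from s₀ ending in {s₁, s₂} is at least 12^{(2n−5)/3} (interpreting the exponent via the case analysis n − 1 ≡ 0, 1, 2 mod 3). -/
import Mathlib


open Real

/-- Transition-count matrix of the automaton: 6 edges s₀→s₁, 1 self-loop s₁→s₁,
4 edges s₁→s₂, 6 edges s₂→s₀. -/
def chainMatrix : Matrix (Fin 3) (Fin 3) ℕ :=
  Matrix.of fun i j =>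
    if i = 0 ∧ j = 1 then 6 else if i = 1 ∧ j = 1 then 1
    else if i = 1 ∧ j = 2 then 4 else if i = 2 ∧ j = 0 then 6 else 0

lemma chainMatrix_cube : chainMatrix ^ 3 =
    Matrix.of ![![144, 6, 24], ![24, 145, 4], ![0, 36, 144]] := by
  decide

lemma key (m : ℕ) :
    144 * ((chainMatrix ^ m) 0 1 + (chainMatrix ^ m) 0 2) ≤
      (chainMatrix ^ (m + 3)) 0 1 + (chainMatrix ^ (m + 3)) 0 2 := by
  have h : chainMatrix ^ (m + 3) = chainMatrix ^ m * chainMatrix ^ 3 := pow_add _ _ _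
  rw [h, chainMatrix_cube]
  simp [Matrix.mul_apply, Fin.sum_univ_three]
  omega

lemma base1 : (chainMatrix ^ 1) 0 1 + (chainMatrix ^ 1) 0 2 = 6 := by decide
lemma base2 : (chainMatrix ^ 2) 0 1 + (chainMatrix ^ 2) 0 2 = 30 := by decide
lemma base3 : (chainMatrix ^ 3) 0 1 + (chainMatrix ^ 3) 0 2 = 30 := by decide

lemma main_lemma : ∀ k r : ℕ, 1 ≤ r → r ≤ 3 →
    (12 : ℝ) ^ ((2 * ((3 * k + r : ℕ) : ℝ) - 3) / 3) ≤
      (((chainMatrix ^ (3 * k + r)) 0 1 + (chainMatrix ^ (3 * k + r)) 0 2 : ℕ) : ℝ) := by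
  intro k
  induction k with
  | zero =>
    intro r h1 h3
    interval_cases r
    · -- r = 1 : 12^(-1/3) ≤ 6
      simp only [Nat.mul_zero, Nat.zero_add, base1]
      have h : (12 : ℝ) ^ ((2 * ((1 : ℕ) : ℝ) - 3) / 3) ≤ 1 := by
        apply Real.rpow_le_one_of_one_le_of_nonpos (by norm_num)
        norm_num
      calc (12 : ℝ) ^ ((2 * ((1 : ℕ) : ℝ) - 3) / 3) ≤ 1 := h
        _ ≤ ((6 : ℕ) : ℝ) := by norm_num
    · -- r = 2 : 12^(1/3) ≤ 30
      simp only [Nat.mul_zero, Nat.zero_add, base2]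
      have h : (12 : ℝ) ^ ((2 * ((2 : ℕ) : ℝ) - 3) / 3) ≤ (12 : ℝ) ^ (1 : ℝ) := by
        apply Real.rpow_le_rpow_of_exponent_le (by norm_num)
        norm_num
      calc (12 : ℝ) ^ ((2 * ((2 : ℕ) : ℝ) - 3) / 3) ≤ (12 : ℝ) ^ (1 : ℝ) := h
        _ = 12 := Real.rpow_one 12
        _ ≤ ((30 : ℕ) : ℝ) := by norm_num
    · -- r = 3 : 12^1 ≤ 30
      simp only [Nat.mul_zero, Nat.zero_add, base3]
      have h : (2 * ((3 : ℕ) : ℝ) - 3) / 3 = 1 := by norm_num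
      rw [h, Real.rpow_one]
      norm_num
  | succ k ih =>
    intro r h1 h3
    have h2 : 3 * (k + 1) + r = (3 * k + r) + 3 := by ring
    rw [h2]
    have hkey := key (3 * k + r)
    have hih := ih r h1 h3
    have hexp : (2 * (((3 * k + r) + 3 : ℕ) : ℝ) - 3) / 3
        = (2 * ((3 * k + r : ℕ) : ℝ) - 3) / 3 + 2 := by
      push_cast
      ring
    rw [hexp]
    have h12 : (12 : ℝ) ^ ((2 * ((3 * k + r : ℕ) : ℝ) - 3) / 3 + 2)
        = (12 : ℝ) ^ ((2 * ((3 * k + r : ℕ) : ℝ) - 3) / 3) * 144 := by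
      rw [Real.rpow_add (by norm_num)]
      congr 1
      rw [show (2 : ℝ) = ((2 : ℕ) : ℝ) by norm_num, Real.rpow_natCast]
      norm_num
    rw [h12]
    calc (12 : ℝ) ^ ((2 * ((3 * k + r : ℕ) : ℝ) - 3) / 3) * 144
        ≤ (((chainMatrix ^ (3 * k + r)) 0 1 + (chainMatrix ^ (3 * k + r)) 0 2 : ℕ) : ℝ) * 144 := by
          apply mul_le_mul_of_nonneg_right hih (by norm_num)
      _ ≤ (((chainMatrix ^ (3 * k + r + 3)) 0 1 + (chainMatrix ^ (3 * k + r + 3)) 0 2 : ℕ) : ℝ) := by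
          rw [show (((chainMatrix ^ (3 * k + r)) 0 1 + (chainMatrix ^ (3 * k + r)) 0 2 : ℕ) : ℝ) * 144
              = ((144 * ((chainMatrix ^ (3 * k + r)) 0 1 + (chainMatrix ^ (3 * k + r)) 0 2) : ℕ) : ℝ) by
            push_cast; ring]
          exact_mod_cast hkey

/-- For n ≥ 2, the number of walks of length n−1 from s₀ ending in {s₁, s₂}
(i.e. accepted words of length n−1) is at least 12^{(2n−5)/3}. -/
theorem stmt11 (n : ℕ) (hn : 2 ≤ n) :
    (12 : ℝ) ^ ((2 * (n : ℝ) - 5) / 3) ≤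
      (((chainMatrix ^ (n - 1)) 0 1 + (chainMatrix ^ (n - 1)) 0 2 : ℕ) : ℝ) := by
  set m := n - 1 with hm
  have hm1 : 1 ≤ m := by omega
  set k := (m - 1) / 3 with hk
  set r := (m - 1) % 3 + 1 with hr
  have hmr : m = 3 * k + r := by omega
  have h1 : 1 ≤ r := by omega
  have h3 : r ≤ 3 := by omega
  have := main_lemma k r h1 h3
  rw [← hmr] at this
  have hcast : (2 * (n : ℝ) - 5) / 3 = (2 * ((m : ℕ) : ℝ) - 3) / 3 := by
    have hn' : n = m + 1 := by omega
    rw [hn']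
    push_cast
    ring
  rw [hcast]
  exact this
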